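/- Let A be a Banach algebra whose second dual A** (with the first Arens product) has the I-w*w property: for every F in A**, the map G ↦ FG is weak*-to-weak continuous. If A** is weakly amenable, then A is weakly amenable. -/

import Mathlib

open NormedSpace ContinuousLinearMap Filter

set_option maxHeartbeats 1000000

noncomputable section

namespace NormedSpace

/-- The topological dual of a seminormed space `E` (the former Mathlib `NormedSpace.Dual`). -/
abbrev Dual (𝕜 : Type*) [NontriviallyNormedField 𝕜] (E : Type*) [SeminormedAddCommGroup E]
    [NormedSpace 𝕜 E] : Type _ :=
  E →L[𝕜] 𝕜

end NormedSpace

/-- The adjoint (dual map) of a continuous linear map: `dMap T φ = φ ∘ T`. -/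
def dMap {E F : Type*} [NormedAddCommGroup E] [NormedSpace ℝ E]
    [NormedAddCommGroup F] [NormedSpace ℝ F] (T : E →L[ℝ] F) :
    Dual ℝ F →L[ℝ] Dual ℝ E :=
  (ContinuousLinearMap.compL ℝ E F ℝ).flip T

/-- The double adjoint of a continuous linear map. -/
def ddMap {E F : Type*} [NormedAddCommGroup E] [NormedSpace ℝ E]
    [NormedAddCommGroup F] [NormedSpace ℝ F] (T : E →L[ℝ] F) :
    Dual ℝ (Dual ℝ E) →L[ℝ] Dual ℝ (Dual ℝ F) :=
  dMap (dMap T)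

/-- The (first, left) Arens extension of a bounded bilinear map `m : E × F → G` to the
biduals, via the classical three steps:
`⟨g'·e, f⟩ = ⟨g', m e f⟩`, `⟨Ψ·g', e⟩ = ⟨Ψ, g'·e⟩`, `⟨arensExt m Φ Ψ, g'⟩ = ⟨Φ, Ψ·g'⟩`. -/
def arensExt {E F G : Type*} [NormedAddCommGroup E] [NormedSpace ℝ E]
    [NormedAddCommGroup F] [NormedSpace ℝ F] [NormedAddCommGroup G] [NormedSpace ℝ G]
    (m : E →L[ℝ] F →L[ℝ] G) :
    Dual ℝ (Dual ℝ E) →L[ℝ] Dual ℝ (Dual ℝ F) →L[ℝ] Dual ℝ (Dual ℝ G) :=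
  let s1 : E →L[ℝ] (Dual ℝ G →L[ℝ] Dual ℝ F) :=
    ((ContinuousLinearMap.compL ℝ F G ℝ).flip).comp m
  let s2 : Dual ℝ G →L[ℝ] (Dual ℝ (Dual ℝ F) →L[ℝ] Dual ℝ E) :=
    ((ContinuousLinearMap.compL ℝ E (Dual ℝ F) ℝ).flip).comp s1.flip
  (((ContinuousLinearMap.compL ℝ (Dual ℝ G) (Dual ℝ E) ℝ).flip).comp s2.flip).flip

/-- The first Arens product on the bidual of a (possibly non-unital) Banach algebra:
`⟨F G, a'⟩ = ⟨F, G·a'⟩` where `⟨G·a', a⟩ = ⟨G, a'·a⟩` and `⟨a'·a, b⟩ = ⟨a', a*b⟩`. -/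
def arens1 (A : Type*) [NonUnitalNormedRing A] [NormedSpace ℝ A]
    [IsScalarTower ℝ A A] [SMulCommClass ℝ A A] :
    Dual ℝ (Dual ℝ A) →L[ℝ] Dual ℝ (Dual ℝ A) →L[ℝ] Dual ℝ (Dual ℝ A) :=
  arensExt (ContinuousLinearMap.mul ℝ A)

/-- The second Arens product on the bidual of a (possibly non-unital) Banach algebra:
`⟨F ∘ G, a'⟩ = ⟨G, a'∘F⟩` where `⟨a'∘F, a⟩ = ⟨F, a∘a'⟩` and `⟨a∘a', b⟩ = ⟨a', b*a⟩`. -/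
def arens2 (A : Type*) [NonUnitalNormedRing A] [NormedSpace ℝ A]
    [IsScalarTower ℝ A A] [SMulCommClass ℝ A A] :
    Dual ℝ (Dual ℝ A) →L[ℝ] Dual ℝ (Dual ℝ A) →L[ℝ] Dual ℝ (Dual ℝ A) :=
  (arensExt ((ContinuousLinearMap.mul ℝ A).flip)).flip

/-- `f`, a map from a dual space to a normed space, is weak-star-to-weak continuous. -/
def WstarToWeakContinuous {E F : Type*} [NormedAddCommGroup E] [NormedSpace ℝ E]
    [NormedAddCommGroup F] [NormedSpace ℝ F]
    (f : Dual ℝ E → F) : Prop :=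
  Continuous fun x : WeakDual ℝ E => toWeakSpace ℝ F (f x)
variable {A : Type*} [NonUnitalNormedRing A] [NormedSpace ℝ A]
  [IsScalarTower ℝ A A] [SMulCommClass ℝ A A] [CompleteSpace A]

variable (A) in
/-- The left action of `a ∈ A` on `a' ∈ A*`: `⟨a·a', x⟩ = ⟨a', x*a⟩`. -/
def dualActL (a : A) : Dual ℝ A →L[ℝ] Dual ℝ A :=
  dMap ((ContinuousLinearMap.mul ℝ A).flip a)

variable (A) in
/-- The right action of `a ∈ A` on `a' ∈ A*`: `⟨a'·a, x⟩ = ⟨a', a*x⟩`. -/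
def dualActR (a : A) : Dual ℝ A →L[ℝ] Dual ℝ A :=
  dMap (ContinuousLinearMap.mul ℝ A a)

variable (A) in
/-- The left action of `H ∈ A**` (first Arens product) on `Φ ∈ A***`:
`⟨H·Φ, G⟩ = ⟨Φ, G H⟩`. -/
def triActL (H : Dual ℝ (Dual ℝ A)) :
    Dual ℝ (Dual ℝ (Dual ℝ A)) →L[ℝ] Dual ℝ (Dual ℝ (Dual ℝ A)) :=
  dMap (E := Dual ℝ (Dual ℝ A)) (F := Dual ℝ (Dual ℝ A)) ((arens1 A).flip H)

variable (A) in
/-- The right action of `H ∈ A**` (first Arens product) on `Φ ∈ A***`: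
`⟨Φ·H, G⟩ = ⟨Φ, H G⟩`. -/
def triActR (H : Dual ℝ (Dual ℝ A)) :
    Dual ℝ (Dual ℝ (Dual ℝ A)) →L[ℝ] Dual ℝ (Dual ℝ (Dual ℝ A)) :=
  dMap (E := Dual ℝ (Dual ℝ A)) (F := Dual ℝ (Dual ℝ A)) (arens1 A H)

/-!
The second adjoint `D'' : A** → A***` of a derivation `D : A → A*` is again a derivation.
The identity `D''(F G) = F·D''(G) + D''(F)·G` holds for `F, G ∈ A`, and it extends first in
`G`, then in `F`, because `A` is weak*-dense in `A**` (by finite interpolation) and both sides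
are weak*-continuous in the variable being extended: in `G` this is automatic when `F ∈ A`,
in `F` it is exactly the `I`-`w*w` property, since `D' : A** → A*` is weakly continuous.
Weak amenability of `A**` makes `D''` inner, implemented by some `Φ ∈ A***`, and then `D` is
implemented by the restriction of `Φ` to `A`.
-/

section Bidual

open Topology

variable {E : Type*} [NormedAddCommGroup E] [NormedSpace ℝ E]

theorem exists_forall_mem_apply_eq_bidual_apply (F : Dual ℝ (Dual ℝ E)) (s : Finset (Dual ℝ E)) :
    ∃ x : E, ∀ φ ∈ s, φ x = F φ := by
  classical
  let T : E →ₗ[ℝ] s → ℝ := LinearMap.pi fun φ => ((φ : Dual ℝ E) : E →ₗ[ℝ] ℝ)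
  suffices (fun φ : s => F φ) ∈ LinearMap.range T by
    obtain ⟨x, hx⟩ := this
    exact ⟨x, fun φ hφ => congrFun hx ⟨φ, hφ⟩⟩
  by_contra hF
  obtain ⟨f, hfF, hfT⟩ := (LinearMap.range T).exists_dual_map_eq_bot_of_notMem hF inferInstance
  -- `f` is a linear combination of coordinates, so it pulls back to a functional `ψ` on `E`
  let c : s → ℝ := fun φ => f fun ψ => if φ = ψ then 1 else 0
  let ψ : Dual ℝ E := ∑ φ : s, c φ • (φ : Dual ℝ E)
  have hψ : ψ = 0 := by
    ext x
    have hfTx : f (T x) ∈ (⊥ : Submodule ℝ ℝ) :=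
      hfT ▸ Submodule.mem_map_of_mem (LinearMap.mem_range_self T x)
    rw [Submodule.mem_bot, LinearMap.pi_apply_eq_sum_univ f] at hfTx
    simpa [ψ, T, c, mul_comm] using hfTx
  apply hfF
  have hFψ : F ψ = 0 := by rw [hψ, map_zero]
  rw [LinearMap.pi_apply_eq_sum_univ f]
  simpa [ψ, c, mul_comm] using hFψ

theorem denseRange_toWeakDual_inclusionInDoubleDual :
    DenseRange fun x : E => StrongDual.toWeakDual (inclusionInDoubleDual ℝ E x) := by
  intro F
  -- the points of `E` agreeing with `F` on finitely many functionals converge weak* to `F`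
  let l : Filter E := ⨅ s : Finset (Dual ℝ E), 𝓟 {x | ∀ φ ∈ s, φ x = F φ}
  have hl : l.NeBot := by
    classical
    refine iInf_neBot_of_directed (fun s t => ⟨s ∪ t, ?_, ?_⟩) fun s => ?_
    · exact principal_mono.2 fun x hx φ hφ => hx φ (Finset.mem_union_left t hφ)
    · exact principal_mono.2 fun x hx φ hφ => hx φ (Finset.mem_union_right s hφ)
    · exact principal_neBot_iff.2 (exists_forall_mem_apply_eq_bidual_apply F s)
  refine mem_closure_of_tendsto (b := l) ?_ (Eventually.of_forall fun x => Set.mem_range_self x)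
  refine tendsto_iff_forall_eval_tendsto_topDualPairing.2 fun φ => tendsto_const_nhds.congr' ?_
  filter_upwards [mem_iInf_of_mem {φ} (mem_principal_self _)] with x hx
  exact (hx φ (Finset.mem_singleton_self φ)).symm

theorem eq_of_weakStar_continuous_of_eq_on_inclusion {f g : Dual ℝ (Dual ℝ E) → ℝ}
    (hf : Continuous fun F : WeakDual ℝ (Dual ℝ E) => f F)
    (hg : Continuous fun F : WeakDual ℝ (Dual ℝ E) => g F)
    (h : ∀ x : E, f (inclusionInDoubleDual ℝ E x) = g (inclusionInDoubleDual ℝ E x)) : f = g :=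
  denseRange_toWeakDual_inclusionInDoubleDual.equalizer hf hg (funext h)

end Bidual

section Derivation

omit [CompleteSpace A]

local notation "ι" => inclusionInDoubleDual ℝ A

variable {D : A →L[ℝ] Dual ℝ A}

theorem continuous_arens1_left (G : Dual ℝ (Dual ℝ A)) (a' : Dual ℝ A) :
    Continuous fun F : WeakDual ℝ (Dual ℝ A) => arens1 A F G a' :=
  WeakDual.eval_continuous _

theorem continuous_arens1_inclusion_right (a : A) (a' : Dual ℝ A) :
    Continuous fun G : WeakDual ℝ (Dual ℝ A) => arens1 A (ι a) G a' :=
  WeakDual.eval_continuous (dualActR A a a')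

theorem arens1_inclusion_apply_dMap
    (hD : ∀ a b : A, D (a * b) = dualActL A a (D b) + dualActR A b (D a))
    (a : A) (G H : Dual ℝ (Dual ℝ A)) :
    arens1 A (ι a) G (dMap D H) = G (dMap D (arens1 A H (ι a))) + ι a (dMap D (arens1 A G H)) := by
  suffices (fun G : Dual ℝ (Dual ℝ A) => arens1 A (ι a) G (dMap D H)) =
      fun G => G (dMap D (arens1 A H (ι a))) + ι a (dMap D (arens1 A G H)) from congrFun this G
  refine eq_of_weakStar_continuous_of_eq_on_inclusion (continuous_arens1_inclusion_right a _)
    ((WeakDual.eval_continuous _).add (continuous_arens1_left H (D a))) fun b => ?_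
  show H (D (a * b)) = H (dualActL A a (D b)) + H (dualActR A b (D a))
  rw [hD, map_add]

theorem arens1_apply_dMap
    (hw : ∀ F : Dual ℝ (Dual ℝ A),
      WstarToWeakContinuous fun G : Dual ℝ (Dual ℝ A) => arens1 A F G)
    (hD : ∀ a b : A, D (a * b) = dualActL A a (D b) + dualActR A b (D a))
    (F G H : Dual ℝ (Dual ℝ A)) :
    arens1 A F G (dMap D H) = G (dMap D (arens1 A H F)) + F (dMap D (arens1 A G H)) := by
  have hG : Continuous fun x : WeakSpace ℝ (Dual ℝ (Dual ℝ A)) => G (dMap D x) :=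
    WeakBilin.eval_continuous (topDualPairing ℝ _).flip (G.comp (dMap D))
  suffices (fun F : Dual ℝ (Dual ℝ A) => arens1 A F G (dMap D H)) =
      fun F => G (dMap D (arens1 A H F)) + F (dMap D (arens1 A G H)) from congrFun this F
  exact eq_of_weakStar_continuous_of_eq_on_inclusion (continuous_arens1_left G _)
    ((hG.comp (hw H)).add (WeakDual.eval_continuous _))
    fun a => arens1_inclusion_apply_dMap hD a G H

theorem ddMap_arens1
    (hw : ∀ F : Dual ℝ (Dual ℝ A),
      WstarToWeakContinuous fun G : Dual ℝ (Dual ℝ A) => arens1 A F G)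
    (hD : ∀ a b : A, D (a * b) = dualActL A a (D b) + dualActR A b (D a))
    (F G : Dual ℝ (Dual ℝ A)) :
    ddMap D (arens1 A F G) = triActL A F (ddMap D G) + triActR A G (ddMap D F) :=
  ext (arens1_apply_dMap hw hD F G)

theorem eq_dualActL_sub_dualActR_of_ddMap_eq {Φ : Dual ℝ (Dual ℝ (Dual ℝ A))}
    (hΦ : ∀ a : A, ddMap D (ι a) = triActL A (ι a) Φ - triActR A (ι a) Φ) (a : A) :
    D a = dualActL A a (Φ.comp ι) - dualActR A a (Φ.comp ι) :=
  ext fun x => congr($(hΦ a) (ι x))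

end Derivation

/-- If `A**` (first Arens product) has the `I`-`w*w` property and `A**` is weakly amenable,
then `A` is weakly amenable. -/
theorem weaklyAmenable_of_bidual_Iwstarw
    (hw : ∀ F : Dual ℝ (Dual ℝ A),
      WstarToWeakContinuous fun G : Dual ℝ (Dual ℝ A) => arens1 A F G)
    (hamen : ∀ 𝒟 : Dual ℝ (Dual ℝ A) →L[ℝ] Dual ℝ (Dual ℝ (Dual ℝ A)),
      (∀ F G : Dual ℝ (Dual ℝ A),
        𝒟 (arens1 A F G) = triActL A F (𝒟 G) + triActR A G (𝒟 F)) →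
      ∃ Φ : Dual ℝ (Dual ℝ (Dual ℝ A)), ∀ F : Dual ℝ (Dual ℝ A),
        𝒟 F = triActL A F Φ - triActR A F Φ)
    (D : A →L[ℝ] Dual ℝ A)
    (hD : ∀ a b : A, D (a * b) = dualActL A a (D b) + dualActR A b (D a)) :
    ∃ f : Dual ℝ A, ∀ a : A, D a = dualActL A a f - dualActR A a f := by
  obtain ⟨Φ, hΦ⟩ := hamen (ddMap D) (ddMap_arens1 hw hD)
  exact ⟨Φ.comp (inclusionInDoubleDual ℝ A),
    eq_dualActL_sub_dualActR_of_ddMap_eq fun a => hΦ _⟩
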